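/- arXiv:1311.5407 — 10 statements merged into one kernel-verified Lean document; each statement's English description precedes it below -/
import Mathlib

section
/- Let (M,d) be a metric space, p > 1, x, y ∈ M, t ∈ [0,1], and z a point with d(x,z) = t·d(x,y) and d(z,y) = (1-t)·d(x,y). Then for every m ∈ M, t^(p-1)·d(m,y)^p ≤ d(m,z)^p + t^(p-1)·(1-t)·d(x,y)^p. Moreover, taking m = x gives equality. -/
theorem stmt0 {M : Type*} [MetricSpace M] (p : ℝ) (hp : 1 < p)
    (x y z : M) (t : ℝ) (ht0 : 0 ≤ t) (ht1 : t ≤ 1)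
    (hxz : dist x z = t * dist x y) (hzy : dist z y = (1 - t) * dist x y) :
    (∀ m : M, t ^ (p - 1) * dist m y ^ p ≤
        dist m z ^ p + t ^ (p - 1) * (1 - t) * dist x y ^ p) ∧
    t ^ (p - 1) * dist x y ^ p =
        dist x z ^ p + t ^ (p - 1) * (1 - t) * dist x y ^ p := by
  have hp0 : (0:ℝ) < p := by linarith
  have hp1 : (0:ℝ) < p - 1 := by linarith
  have htp : t ^ (p - 1) * t = t ^ p := by
    rcases eq_or_lt_of_le ht0 with h0 | h0
    · rw [← h0, Real.zero_rpow hp1.ne', Real.zero_rpow hp0.ne', zero_mul]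
    · have h := Real.rpow_add h0 (p - 1) 1
      rw [Real.rpow_one] at h
      rw [← h]
      ring_nf
  have heq : t ^ (p - 1) * dist x y ^ p =
      dist x z ^ p + t ^ (p - 1) * (1 - t) * dist x y ^ p := by
    rw [hxz, Real.mul_rpow ht0 dist_nonneg, ← htp]
    ring
  refine ⟨fun m => ?_, heq⟩
  rcases eq_or_lt_of_le ht0 with h0 | h0
  · rw [← h0, Real.zero_rpow hp1.ne', zero_mul, zero_mul, zero_mul, add_zero]
    positivity
  rcases eq_or_lt_of_le ht1 with h1 | h1
  · have hzy' : z = y := by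
      have : dist z y = 0 := by rw [hzy, h1]; ring
      exact dist_eq_zero.mp this
    subst hzy'
    rw [h1]
    simp
  -- main case 0 < t < 1
  have h1t : (0:ℝ) < 1 - t := by linarith
  set a := dist m z with ha
  set D := dist x y with hD
  have ha0 : 0 ≤ a := dist_nonneg
  have hD0 : 0 ≤ D := dist_nonneg
  have htri : dist m y ≤ a + (1 - t) * D := by
    calc dist m y ≤ dist m z + dist z y := dist_triangle m z y
    _ = a + (1 - t) * D := by rw [hzy]
  have hmono : dist m y ^ p ≤ (a + (1 - t) * D) ^ p :=
    Real.rpow_le_rpow dist_nonneg htri hp0.le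
  have hconv := (convexOn_rpow hp.le).2 (x := a / t) (y := D)
      (Set.mem_Ici.mpr (by positivity)) (Set.mem_Ici.mpr hD0)
      ht0 h1t.le (by ring)
  simp only [smul_eq_mul] at hconv
  have hsum : t * (a / t) + (1 - t) * D = a + (1 - t) * D := by
    field_simp
  rw [hsum] at hconv
  have hkey : dist m y ^ p ≤ t * (a / t) ^ p + (1 - t) * D ^ p :=
    hmono.trans hconv
  have hmul : t ^ (p - 1) * (t * (a / t) ^ p) = a ^ p := by
    rw [Real.div_rpow ha0 h0.le, ← mul_assoc, htp]
    field_simp [(Real.rpow_pos_of_pos h0 p).ne']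
  calc t ^ (p - 1) * dist m y ^ p
      ≤ t ^ (p - 1) * (t * (a / t) ^ p + (1 - t) * D ^ p) := by
        apply mul_le_mul_of_nonneg_left hkey (Real.rpow_nonneg ht0 _)
    _ = a ^ p + t ^ (p - 1) * (1 - t) * D ^ p := by rw [mul_add, hmul]; ring
end

section
/- Let (M,d) be a metric space, L : [0,∞) → [0,∞) a convex increasing function, x, y ∈ M, t ∈ (0,1], and z a point with d(x,z) = t·d(x,y) and d(z,y) = (1-t)·d(x,y). Then for every m ∈ M, t⁻¹·L(d(m,y)) ≤ L(d(m,z)/t) + t⁻¹·(1-t)·L(d(x,y)). Moreover, taking m = x gives equality. -/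
theorem stmt1 {M : Type*} [MetricSpace M] (L : ℝ → ℝ)
    (hconv : ConvexOn ℝ (Set.Ici 0) L) (hmono : MonotoneOn L (Set.Ici 0))
    (hL0 : L 0 = 0)
    (x y z : M) (t : ℝ) (ht0 : 0 < t) (ht1 : t ≤ 1)
    (hxz : dist x z = t * dist x y) (hzy : dist z y = (1 - t) * dist x y) :
    (∀ m : M, t⁻¹ * L (dist m y) ≤ L (dist m z / t) + t⁻¹ * (1 - t) * L (dist x y)) ∧
    t⁻¹ * L (dist x y) = L (dist x z / t) + t⁻¹ * (1 - t) * L (dist x y) := by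
  constructor
  · intro m
    have ha : dist m z / t ∈ Set.Ici (0:ℝ) := div_nonneg dist_nonneg ht0.le
    have hb : dist x y ∈ Set.Ici (0:ℝ) := dist_nonneg
    have hconv' := hconv.2 ha hb ht0.le (by linarith : (0:ℝ) ≤ 1 - t) (by ring)
    have hmy : dist m y ≤ t * (dist m z / t) + (1 - t) * dist x y := by
      rw [mul_div_cancel₀ _ ht0.ne', ← hzy]
      exact dist_triangle m z y
    have hmem : t * (dist m z / t) + (1 - t) * dist x y ∈ Set.Ici (0:ℝ) := by
      have : (0:ℝ) ≤ t * (dist m z / t) := mul_nonneg ht0.le ha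
      have : (0:ℝ) ≤ (1 - t) * dist x y := mul_nonneg (by linarith) dist_nonneg
      simp only [Set.mem_Ici]; positivity
    have h1 : L (dist m y) ≤ t * L (dist m z / t) + (1 - t) * L (dist x y) :=
      le_trans (hmono (Set.mem_Ici.mpr dist_nonneg) hmem hmy) hconv'
    have := mul_le_mul_of_nonneg_left h1 (inv_nonneg.mpr ht0.le)
    calc t⁻¹ * L (dist m y) ≤ t⁻¹ * (t * L (dist m z / t) + (1 - t) * L (dist x y)) := this
      _ = L (dist m z / t) + t⁻¹ * (1 - t) * L (dist x y) := by
          field_simp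
  · rw [hxz, mul_div_cancel_left₀ _ ht0.ne']
    field_simp
    ring
end

section
/- Let X, Y be compact subsets of a geodesic metric space M, p > 1, and t ∈ [0,1]. If φ is c_p-concave relative to (X,Y), then t^{p-1}·φ is c_p-concave relative to (X, Z_t(X,Y)), where Z_t(X,Y) = ∪_{x∈X, y∈Y} Z_t(x,y) is the set of t-intermediate points. -/
/-- The set of `t`-intermediate points between `x` and `y`. -/
def Zt {M : Type*} [MetricSpace M] (t : ℝ) (x y : M) : Set M :=
  {z | dist x z = t * dist x y ∧ dist z y = (1 - t) * dist x y}

/-- The set of `t`-intermediate points between `X` and `Y`. -/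
def ZtSet {M : Type*} [MetricSpace M] (t : ℝ) (X Y : Set M) : Set M :=
  ⋃ x ∈ X, ⋃ y ∈ Y, Zt t x y

private lemma keyA {p t : ℝ} (hp : 1 < p) (ht0 : 0 ≤ t) (ht1 : t ≤ 1)
    {a b c : ℝ} (ha : 0 ≤ a) (hb : 0 ≤ b) (hc : 0 ≤ c)
    (habc : c ≤ a + (1 - t) * b) :
    t ^ (p - 1) * c ^ p ≤ a ^ p + t ^ (p - 1) * ((1 - t) * b ^ p) := by
  rcases eq_or_lt_of_le ht0 with h0 | h0
  · rw [← h0, Real.zero_rpow (by linarith : p - (1:ℝ) ≠ 0)]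
    simpa using Real.rpow_nonneg ha p
  have hcp : c ^ p ≤ (a + (1 - t) * b) ^ p :=
    Real.rpow_le_rpow hc habc (by linarith)
  have hrp : (0:ℝ) ≤ t ^ (p - 1) := Real.rpow_nonneg ht0 _
  have step : t ^ (p - 1) * (a + (1 - t) * b) ^ p ≤ a ^ p + t ^ (p - 1) * ((1 - t) * b ^ p) := by
    rcases eq_or_lt_of_le ht1 with h1 | h1
    · subst h1
      norm_num [Real.one_rpow]
    · -- 0 < t < 1 : convexity
      have hmem1 : a / t ∈ Set.Ici (0:ℝ) := Set.mem_Ici.2 (div_nonneg ha (le_of_lt h0))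
      have hmem2 : b ∈ Set.Ici (0:ℝ) := Set.mem_Ici.2 hb
      have hconv := (convexOn_rpow (le_of_lt hp)).2 hmem1 hmem2 (le_of_lt h0)
        (by linarith : (0:ℝ) ≤ 1 - t) (by ring)
      simp only [smul_eq_mul] at hconv
      have hta : t * (a / t) = a := by field_simp
      rw [hta] at hconv
      -- hconv : (a + (1-t)*b)^p ≤ t * (a/t)^p + (1-t)*b^p
      have hdiv : (a / t) ^ p = a ^ p / t ^ p := Real.div_rpow ha (le_of_lt h0) p
      have htp : t ^ p = t * t ^ (p - 1) := by
        have : p = 1 + (p - 1) := by ring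
        rw [this, Real.rpow_add h0, Real.rpow_one]
        ring_nf
      have htpos : (0:ℝ) < t ^ (p - 1) := Real.rpow_pos_of_pos h0 _
      have hkey : t ^ (p - 1) * (t * (a / t) ^ p) = a ^ p := by
        rw [hdiv, htp]
        field_simp
      calc t ^ (p - 1) * (a + (1 - t) * b) ^ p
          ≤ t ^ (p - 1) * (t * (a / t) ^ p + (1 - t) * b ^ p) :=
            mul_le_mul_of_nonneg_left hconv hrp
        _ = t ^ (p - 1) * (t * (a / t) ^ p) + t ^ (p - 1) * ((1 - t) * b ^ p) := by ring
        _ = a ^ p + t ^ (p - 1) * ((1 - t) * b ^ p) := by rw [hkey]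
  exact le_trans (mul_le_mul_of_nonneg_left hcp hrp) step

private lemma ERealE3 (A : ℝ) (v : EReal) (hv : v ≠ ⊤) :
    v ≤ (A : EReal) - ((A : EReal) - v) := by
  induction v with
  | bot => rw [EReal.coe_sub_bot, EReal.sub_top]
  | coe v => rw [← EReal.coe_sub, ← EReal.coe_sub]; norm_num
  | top => exact absurd rfl hv

private lemma ERealMulNeTop (r : ℝ) (hr : 0 ≤ r) (v : EReal) (hv : v ≠ ⊤) :
    (r : EReal) * v ≠ ⊤ := by
  induction v with
  | bot =>
    rcases eq_or_lt_of_le hr with h0 | h0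
    · rw [← h0, EReal.coe_zero, zero_mul]; exact EReal.zero_ne_top
    · rw [EReal.coe_mul_bot_of_pos h0]; exact bot_ne_top
  | coe v => rw [← EReal.coe_mul]; exact EReal.coe_ne_top _
  | top => exact absurd rfl hv

private lemma ERealE1 (A B D r : ℝ) (hr : 0 ≤ r) (s : EReal) (h : r * B - D ≤ A) :
    (r : EReal) * s - (D : EReal) ≤ (A : EReal) - (r : EReal) * ((B : EReal) - s) := by
  rcases eq_or_lt_of_le hr with h0 | h0
  · rw [← h0] at h ⊢
    rw [EReal.coe_zero, zero_mul, zero_mul, zero_sub, sub_zero, ← EReal.coe_neg,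
      EReal.coe_le_coe_iff]
    linarith
  induction s with
  | bot =>
    rw [EReal.coe_mul_bot_of_pos h0]
    simp only [EReal.bot_sub]
    exact bot_le
  | coe s =>
    rw [← EReal.coe_sub, ← EReal.coe_mul, ← EReal.coe_sub, ← EReal.coe_mul, ← EReal.coe_sub,
      EReal.coe_le_coe_iff]
    nlinarith [h0.le]
  | top =>
    rw [EReal.sub_top, EReal.coe_mul_bot_of_pos h0, EReal.coe_sub_bot]
    exact le_top

private lemma ERealE2 (E c D r : ℝ) (hr : 0 ≤ r) (hE : 0 ≤ E) (hD : 0 ≤ D) (s : EReal)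
    (h : E + D = r * c) :
    (E : EReal) - ((r : EReal) * s - (D : EReal)) ≤ (r : EReal) * ((c : EReal) - s) := by
  rcases eq_or_lt_of_le hr with h0 | h0
  · rw [← h0, zero_mul] at h
    have hE0 : E = 0 := by linarith
    have hD0 : D = 0 := by linarith
    rw [← h0, hE0, hD0]
    simp
  induction s with
  | bot =>
    rw [EReal.coe_mul_bot_of_pos h0, EReal.coe_sub_bot, EReal.coe_mul_top_of_pos h0]
    simp only [EReal.bot_sub, EReal.coe_sub_bot]
    exact le_top
  | coe s =>
    rw [← EReal.coe_sub, ← EReal.coe_mul, ← EReal.coe_sub, ← EReal.coe_sub, ← EReal.coe_mul,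
      EReal.coe_le_coe_iff]
    nlinarith [h0.le]
  | top =>
    rw [EReal.coe_mul_top_of_pos h0, EReal.top_sub_coe, EReal.sub_top]
    exact bot_le

private lemma ERealiInfMulLe {ι : Sort*} (r : ℝ) (hr : 0 < r) (f : ι → EReal) :
    (⨅ i, (r : EReal) * f i) ≤ (r : EReal) * ⨅ i, f i := by
  have hr' : (0:EReal) ≤ (r⁻¹ : ℝ) := by
    rw [← EReal.coe_zero, EReal.coe_le_coe_iff]; positivity
  have h1 : ((r⁻¹ : ℝ) : EReal) * ⨅ i, (r : EReal) * f i ≤ ⨅ i, f i := by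
    refine le_iInf fun i => ?_
    calc ((r⁻¹ : ℝ) : EReal) * ⨅ i, (r : EReal) * f i
        ≤ ((r⁻¹ : ℝ) : EReal) * ((r : EReal) * f i) :=
          mul_le_mul_of_nonneg_left (iInf_le _ i) hr'
      _ = f i := by
          rw [← mul_assoc, ← EReal.coe_mul, inv_mul_cancel₀ hr.ne', EReal.coe_one, one_mul]
  calc (⨅ i, (r : EReal) * f i)
      = (r : EReal) * (((r⁻¹ : ℝ) : EReal) * ⨅ i, (r : EReal) * f i) := by
        rw [← mul_assoc, ← EReal.coe_mul, mul_inv_cancel₀ hr.ne', EReal.coe_one, one_mul]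
    _ ≤ (r : EReal) * ⨅ i, f i := by
        refine mul_le_mul_of_nonneg_left h1 ?_
        rw [← EReal.coe_zero, EReal.coe_le_coe_iff]; positivity

theorem stmt8 {M : Type*} [MetricSpace M]
    (hgeo : ∀ x y : M, ∀ t ∈ Set.Icc (0:ℝ) 1,
      ∃ z : M, dist x z = t * dist x y ∧ dist z y = (1 - t) * dist x y)
    (p : ℝ) (hp : 1 < p)
    (X Y : Set M) (hX : IsCompact X) (hY : IsCompact Y)
    (t : ℝ) (ht : t ∈ Set.Icc (0:ℝ) 1)
    (φ : X → EReal) (hproper : ∃ x : X, φ x ≠ ⊥) (hne : ∀ x : X, φ x ≠ ⊤)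
    (hconc : ∃ ψ : Y → EReal, ∀ x : X,
      φ x = ⨅ y : Y, (((dist (x : M) (y : M)) ^ p / p : ℝ) : EReal) - ψ y) :
    ∃ ψ' : ZtSet t X Y → EReal, ∀ x : X,
      ((t ^ (p - 1) : ℝ) : EReal) * φ x =
        ⨅ z : ZtSet t X Y,
          (((dist (x : M) (z : M)) ^ p / p : ℝ) : EReal) - ψ' z := by
  obtain ⟨ψ, hψ⟩ := hconc
  set r : ℝ := t ^ (p - 1) with hrdef
  have hp0 : (0:ℝ) < p := by linarith
  have hr0 : 0 ≤ r := Real.rpow_nonneg ht.1 _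
  refine ⟨fun z => ⨅ x' : X,
    (((dist (x' : M) (z : M)) ^ p / p : ℝ) : EReal) - (r : EReal) * φ x', fun x => ?_⟩
  have hYne : Nonempty Y := by
    by_contra h
    rw [not_nonempty_iff] at h
    exact hne x (by rw [hψ x, iInf_of_empty])
  apply le_antisymm
  · refine le_iInf fun z => ?_
    have h1 : (⨅ x' : X, (((dist (x' : M) (z : M)) ^ p / p : ℝ) : EReal) - (r : EReal) * φ x')
        ≤ (((dist (x : M) (z : M)) ^ p / p : ℝ) : EReal) - (r : EReal) * φ x := iInf_le _ x
    have hvne : (r : EReal) * φ x ≠ ⊤ := ERealMulNeTop r hr0 (φ x) (hne x)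
    exact le_trans (ERealE3 _ _ hvne) (EReal.sub_le_sub le_rfl h1)
  · have key : ∀ y : Y, ∃ z : ZtSet t X Y,
        ((((dist (x : M) (z : M)) ^ p / p : ℝ) : EReal) -
          ⨅ x' : X, (((dist (x' : M) (z : M)) ^ p / p : ℝ) : EReal) - (r : EReal) * φ x')
        ≤ (r : EReal) * ((((dist (x : M) (y : M)) ^ p / p : ℝ) : EReal) - ψ y) := by
      intro y
      obtain ⟨z₀, hz1, hz2⟩ := hgeo (x : M) (y : M) t ht
      have hzmem : z₀ ∈ ZtSet t X Y := by
        simp only [ZtSet, Set.mem_iUnion]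
        exact ⟨x, x.2, y, y.2, hz1, hz2⟩
      refine ⟨⟨z₀, hzmem⟩, ?_⟩
      set cxy : ℝ := (dist (x : M) (y : M)) ^ p / p with hcxy
      set D : ℝ := r * ((1 - t) * cxy) with hD
      have hcxy0 : 0 ≤ cxy := div_nonneg (Real.rpow_nonneg dist_nonneg p) hp0.le
      have hD0 : 0 ≤ D := by
        have : (0:ℝ) ≤ 1 - t := by linarith [ht.2]
        positivity
      have hbound : ((r : EReal) * ψ y - (D : EReal)) ≤
          ⨅ x' : X, (((dist (x' : M) z₀) ^ p / p : ℝ) : EReal) - (r : EReal) * φ x' := by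
        refine le_iInf fun x' => ?_
        have htri : dist (x' : M) (y : M) ≤ dist (x' : M) z₀ + (1 - t) * dist (x : M) (y : M) := by
          calc dist (x' : M) (y : M) ≤ dist (x' : M) z₀ + dist z₀ (y : M) := dist_triangle _ _ _
            _ = dist (x' : M) z₀ + (1 - t) * dist (x : M) (y : M) := by rw [hz2]
        have hk := keyA hp ht.1 ht.2 dist_nonneg (dist_nonneg (x := (x:M)) (y := (y:M)))
          (dist_nonneg (x := (x':M)) (y := (y:M))) htri
        have h : r * ((dist (x' : M) (y : M)) ^ p / p) - D ≤ (dist (x' : M) z₀) ^ p / p := by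
          rw [hD, hcxy]
          have h2 : r * ((dist (x' : M) (y : M)) ^ p) - r * ((1 - t) * (dist (x : M) (y : M)) ^ p)
              ≤ (dist (x' : M) z₀) ^ p := by linarith
          calc r * (dist (x' : M) (y : M) ^ p / p) - r * ((1 - t) * (dist (x : M) (y : M) ^ p / p))
              = (r * ((dist (x' : M) (y : M)) ^ p) -
                  r * ((1 - t) * (dist (x : M) (y : M)) ^ p)) / p := by ring
            _ ≤ (dist (x' : M) z₀) ^ p / p := (div_le_div_iff_of_pos_right hp0).2 h2
        have hφ : (r : EReal) * φ x' ≤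
            (r : EReal) * ((((dist (x' : M) (y : M)) ^ p / p : ℝ) : EReal) - ψ y) := by
          refine mul_le_mul_of_nonneg_left ?_ ?_
          · rw [hψ x']; exact iInf_le _ y
          · rw [← EReal.coe_zero, EReal.coe_le_coe_iff]; exact hr0
        refine le_trans (ERealE1 ((dist (x' : M) z₀) ^ p / p)
          ((dist (x' : M) (y : M)) ^ p / p) D r hr0 (ψ y) h) ?_
        exact EReal.sub_le_sub le_rfl hφ
      have hEq : (dist (x : M) z₀) ^ p / p + D = r * cxy := by
        rw [hz1, Real.mul_rpow ht.1 dist_nonneg, hD, hcxy]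
        have htp : t ^ p = t * t ^ (p - 1) := by
          rcases eq_or_lt_of_le ht.1 with h0 | h0
          · rw [← h0, Real.zero_rpow hp0.ne', zero_mul]
          · have hpe : p = 1 + (p - 1) := by ring
            rw [hpe, Real.rpow_add h0, Real.rpow_one]
            ring_nf
        rw [htp, hrdef]
        ring
      calc (((dist (x : M) z₀) ^ p / p : ℝ) : EReal) -
            (⨅ x' : X, (((dist (x' : M) z₀) ^ p / p : ℝ) : EReal) - (r : EReal) * φ x')
          ≤ (((dist (x : M) z₀) ^ p / p : ℝ) : EReal) - ((r : EReal) * ψ y - (D : EReal)) :=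
            EReal.sub_le_sub le_rfl hbound
        _ ≤ (r : EReal) * (((cxy : ℝ) : EReal) - ψ y) :=
            ERealE2 _ _ _ _ hr0 (div_nonneg (Real.rpow_nonneg dist_nonneg p) hp0.le) hD0 (ψ y) hEq
    rw [hψ x]
    have h2 : (⨅ z : ZtSet t X Y,
          (((dist (x : M) (z : M)) ^ p / p : ℝ) : EReal) -
            ⨅ x' : X, (((dist (x' : M) (z : M)) ^ p / p : ℝ) : EReal) - (r : EReal) * φ x')
        ≤ ⨅ y : Y, (r : EReal) * ((((dist (x : M) (y : M)) ^ p / p : ℝ) : EReal) - ψ y) := by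
      refine le_iInf fun y => ?_
      obtain ⟨z, hz⟩ := key y
      exact (iInf_le _ z).trans hz
    refine h2.trans ?_
    rcases eq_or_lt_of_le hr0 with h0 | h0
    · rw [← h0]
      simp only [EReal.coe_zero, zero_mul]
      rw [iInf_const]
    · exact ERealiInfMulLe r h0 _
end

section
/- Let X, Y be compact subsets of a geodesic metric space M, L : [0,∞) → [0,∞) strictly convex and increasing with L(0)=0, and t ∈ (0,1]. If φ is c_L-concave relative to (X,Y) (with cost c_L(x,y) = L(d(x,y))), then t⁻¹·φ is c_{L_t}-concave relative to (X, Z_t(X,Y)) where L_t(r) = L(r/t). -/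
lemma ereal_coe_mul_iInf {ι : Sort*} {c : ℝ} (hc : 0 < c) (f : ι → EReal) :
    ((c : ℝ) : EReal) * ⨅ i, f i = ⨅ i, ((c : ℝ) : EReal) * f i := by
  have hcancel' : ∀ a : EReal, ((c : ℝ) : EReal) * (((c⁻¹ : ℝ) : EReal) * a) = a := by
    intro a
    rw [← mul_assoc, ← EReal.coe_mul, mul_inv_cancel₀ hc.ne', EReal.coe_one, one_mul]
  apply le_antisymm
  · exact le_iInf fun i =>
      mul_le_mul_of_nonneg_left (iInf_le f i) (by exact_mod_cast hc.le)
  · have h1 : ((c⁻¹ : ℝ) : EReal) * (⨅ i, ((c : ℝ) : EReal) * f i) ≤ ⨅ i, f i := by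
      refine le_iInf fun i => ?_
      calc ((c⁻¹ : ℝ) : EReal) * (⨅ i, ((c : ℝ) : EReal) * f i)
          ≤ ((c⁻¹ : ℝ) : EReal) * (((c : ℝ) : EReal) * f i) :=
            mul_le_mul_of_nonneg_left (iInf_le _ i)
              (by exact_mod_cast (inv_nonneg.mpr hc.le))
        _ = f i := by
            rw [← mul_assoc, ← EReal.coe_mul, inv_mul_cancel₀ hc.ne', EReal.coe_one, one_mul]
    calc (⨅ i, ((c : ℝ) : EReal) * f i)
        = ((c : ℝ) : EReal) * (((c⁻¹ : ℝ) : EReal) * (⨅ i, ((c : ℝ) : EReal) * f i)) :=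
          (hcancel' _).symm
      _ ≤ ((c : ℝ) : EReal) * ⨅ i, f i :=
          mul_le_mul_of_nonneg_left h1 (by exact_mod_cast hc.le)

lemma core_ineq {L : ℝ → ℝ} (hconv : ConvexOn ℝ (Set.Ici 0) L)
    (hmono : MonotoneOn L (Set.Ici 0)) {t a b d : ℝ} (ht0 : 0 < t) (ht1 : t < 1)
    (ha : 0 ≤ a) (hb : 0 ≤ b) (hd : 0 ≤ d) (hle : d ≤ t * a + (1 - t) * b) :
    L d ≤ t * L a + (1 - t) * L b := by
  have hmem : t * a + (1 - t) * b ∈ Set.Ici (0:ℝ) := by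
    have : 0 ≤ t * a + (1 - t) * b := by nlinarith
    exact this
  calc L d ≤ L (t * a + (1 - t) * b) := hmono hd hmem hle
    _ ≤ t * L a + (1 - t) * L b := hconv.2 ha hb ht0.le (by linarith) (by ring)



lemma mem_ZtSet {M : Type*} [MetricSpace M] {t : ℝ} {X Y : Set M} {z : M} :
    z ∈ ZtSet t X Y ↔
      ∃ x ∈ X, ∃ y ∈ Y, dist x z = t * dist x y ∧ dist z y = (1 - t) * dist x y := by
  simp only [ZtSet, Zt, Set.mem_iUnion, Set.mem_setOf_eq]
  tauto

theorem stmt9 {M : Type*} [MetricSpace M]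
    (hgeo : ∀ x y : M, ∀ t ∈ Set.Icc (0:ℝ) 1,
      ∃ z : M, dist x z = t * dist x y ∧ dist z y = (1 - t) * dist x y)
    (L : ℝ → ℝ) (hconv : StrictConvexOn ℝ (Set.Ici 0) L)
    (hmono : StrictMonoOn L (Set.Ici 0)) (hL0 : L 0 = 0)
    (X Y : Set M) (hX : IsCompact X) (hY : IsCompact Y)
    (t : ℝ) (ht : t ∈ Set.Ioc (0:ℝ) 1)
    (φ : X → EReal) (hproper : ∃ x : X, φ x ≠ ⊥) (hne : ∀ x : X, φ x ≠ ⊤)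
    (hconc : ∃ ψ : Y → EReal, ∀ x : X,
      φ x = ⨅ y : Y, ((L (dist (x : M) (y : M)) : ℝ) : EReal) - ψ y) :
    ∃ ψ' : ZtSet t X Y → EReal, ∀ x : X,
      ((t⁻¹ : ℝ) : EReal) * φ x =
        ⨅ z : ZtSet t X Y,
          ((L (dist (x : M) (z : M) / t) : ℝ) : EReal) - ψ' z := by
  obtain ⟨ψ, hψ⟩ := hconc
  obtain ⟨x₀, hx₀⟩ := hproper
  have ht0 : 0 < t := ht.1
  have ht1 : t ≤ 1 := ht.2
  have hYne : Nonempty Y := by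
    by_contra h
    rw [not_nonempty_iff] at h
    exact hne x₀ (by rw [hψ x₀, iInf_of_empty])
  have hψtop : ∀ y : Y, ψ y ≠ ⊤ := by
    intro y hy
    apply hx₀
    have h1 : φ x₀ ≤ ((L (dist (x₀ : M) (y : M)) : ℝ) : EReal) - ψ y := by
      rw [hψ x₀]; exact iInf_le _ y
    rw [hy, EReal.sub_top] at h1
    exact le_bot_iff.mp h1
  have hmonoOn : MonotoneOn L (Set.Ici 0) := hmono.monotoneOn
  have hconvOn : ConvexOn ℝ (Set.Ici 0) L := hconv.convexOn
  rcases eq_or_lt_of_le ht1 with h1 | hlt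
  · -- case t = 1
    subst h1
    have hZY : ∀ z : M, z ∈ ZtSet (1:ℝ) X Y → z ∈ Y := by
      intro z hz
      obtain ⟨x, hx, y, hy, hA, hB⟩ := mem_ZtSet.mp hz
      have hzy : dist z y = 0 := by rw [hB]; ring
      rw [dist_eq_zero.mp hzy]; exact hy
    have hYZ : ∀ y : M, y ∈ Y → y ∈ ZtSet (1:ℝ) X Y := by
      intro y hy
      exact mem_ZtSet.mpr ⟨x₀, x₀.2, y, hy, by ring, by rw [dist_self]; ring⟩
    refine ⟨fun z => ψ ⟨z.1, hZY z.1 z.2⟩, fun x => ?_⟩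
    rw [show ((1:ℝ)⁻¹ : ℝ) = 1 by norm_num, EReal.coe_one, one_mul, hψ x]
    apply le_antisymm
    · refine le_iInf fun z => ?_
      have h := iInf_le
        (fun y : Y => ((L (dist (x : M) (y : M)) : ℝ) : EReal) - ψ y)
        ⟨z.1, hZY z.1 z.2⟩
      simpa [div_one] using h
    · refine le_iInf fun y => ?_
      have h := iInf_le
        (fun z : ZtSet (1:ℝ) X Y =>
          ((L (dist (x : M) (z : M) / 1) : ℝ) : EReal) - ψ ⟨z.1, hZY z.1 z.2⟩)
        ⟨y.1, hYZ y.1 y.2⟩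
      simpa [div_one] using h
  · -- case t < 1
    have hs0 : 0 < 1 - t := by linarith
    have hti : (0:ℝ) < t⁻¹ := by positivity
    refine ⟨fun z => ⨆ y : Y, (((t⁻¹ : ℝ) : EReal) * ψ y -
        (((1 - t) / t * L (dist (z : M) (y : M) / (1 - t)) : ℝ) : EReal)), fun x => ?_⟩
    apply le_antisymm
    · refine le_iInf fun z => ?_
      rcases eq_or_ne (φ x) ⊥ with hbot | hbot
      · rw [hbot, EReal.coe_mul_bot_of_pos (by exact_mod_cast hti)]
        exact bot_le
      · obtain ⟨p, hp⟩ : ∃ p : ℝ, φ x = (p : ℝ) :=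
          ⟨(φ x).toReal, (EReal.coe_toReal (hne x) hbot).symm⟩
        set r : ℝ := L (dist (x : M) (z : M) / t) with hr
        have hkey : (⨆ y : Y, (((t⁻¹ : ℝ) : EReal) * ψ y -
            (((1 - t) / t * L (dist (z : M) (y : M) / (1 - t)) : ℝ) : EReal)))
            ≤ ((r - t⁻¹ * p : ℝ) : EReal) := by
          refine iSup_le fun y => ?_
          rcases eq_or_ne (ψ y) ⊥ with hb | hb
          · rw [hb, EReal.coe_mul_bot_of_pos (by exact_mod_cast hti), EReal.bot_sub]
            exact bot_le
          · obtain ⟨q, hq⟩ : ∃ q : ℝ, ψ y = (q : ℝ) :=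
              ⟨(ψ y).toReal, (EReal.coe_toReal (hψtop y) hb).symm⟩
            rw [hq, ← EReal.coe_mul, ← EReal.coe_sub]
            rw [EReal.coe_le_coe_iff]
            have hpq : p ≤ L (dist (x : M) (y : M)) - q := by
              have h2 : φ x ≤ ((L (dist (x : M) (y : M)) : ℝ) : EReal) - ψ y := by
                rw [hψ x]; exact iInf_le _ y
              rw [hp, hq, ← EReal.coe_sub] at h2
              exact_mod_cast h2
            have hcore := core_ineq hconvOn hmonoOn ht0 hlt
              (div_nonneg dist_nonneg ht0.le) (div_nonneg dist_nonneg hs0.le)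
              dist_nonneg
              (show dist (x : M) (y : M) ≤
                  t * (dist (x : M) (z : M) / t) + (1 - t) * (dist (z : M) (y : M) / (1 - t)) by
                rw [mul_div_cancel₀ _ ht0.ne', mul_div_cancel₀ _ hs0.ne']
                exact dist_triangle _ _ _)
            set Lb := L (dist (z : M) (y : M) / (1 - t)) with hLb
            set Ld := L (dist (x : M) (y : M)) with hLd
            rw [← hr] at hcore
            have ha1 := mul_le_mul_of_nonneg_left hcore hti.le
            have ha2 := mul_le_mul_of_nonneg_left hpq hti.le
            have hid : t⁻¹ * (t * r + (1 - t) * Lb) = r + (1 - t) / t * Lb := by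
              field_simp
            have hid2 : t⁻¹ * (Ld - q) = t⁻¹ * Ld - t⁻¹ * q := by ring
            linarith [ha1, ha2]
        calc ((t⁻¹ : ℝ) : EReal) * φ x = ((t⁻¹ * p : ℝ) : EReal) := by
              rw [hp, EReal.coe_mul]
          _ = ((r : ℝ) : EReal) - ((r - t⁻¹ * p : ℝ) : EReal) := by
              rw [← EReal.coe_sub]
              norm_num
          _ ≤ ((r : ℝ) : EReal) - _ := EReal.sub_le_sub le_rfl hkey
    · rw [hψ x, ereal_coe_mul_iInf hti]
      refine le_iInf fun y => ?_
      obtain ⟨z, hz1, hz2⟩ := hgeo (x : M) (y : M) t ⟨ht0.le, ht1⟩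
      have hzmem : z ∈ ZtSet t X Y := mem_ZtSet.mpr ⟨x, x.2, y, y.2, hz1, hz2⟩
      refine (iInf_le _ (⟨z, hzmem⟩ : ZtSet t X Y)).trans ?_
      set d := dist (x : M) (y : M) with hd
      have hdx : dist (x : M) z / t = d := by rw [hz1]; field_simp
      have hdz : dist z (y : M) / (1 - t) = d := by rw [hz2]; field_simp
      have hterm : (((t⁻¹ : ℝ) : EReal) * ψ y -
          (((1 - t) / t * L (dist z (y : M) / (1 - t)) : ℝ) : EReal))
          ≤ ⨆ y' : Y, (((t⁻¹ : ℝ) : EReal) * ψ y' -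
            (((1 - t) / t * L (dist z (y' : M) / (1 - t)) : ℝ) : EReal)) :=
        le_iSup (fun y' : Y => (((t⁻¹ : ℝ) : EReal) * ψ y' -
          (((1 - t) / t * L (dist z (y' : M) / (1 - t)) : ℝ) : EReal))) y
      calc ((L (dist (x : M) z / t) : ℝ) : EReal) -
            (⨆ y' : Y, (((t⁻¹ : ℝ) : EReal) * ψ y' -
              (((1 - t) / t * L (dist z (y' : M) / (1 - t)) : ℝ) : EReal)))
          ≤ ((L d : ℝ) : EReal) -
            (((t⁻¹ : ℝ) : EReal) * ψ y - (((1 - t) / t * L d : ℝ) : EReal)) := by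
            rw [hdx]
            exact EReal.sub_le_sub le_rfl (by rw [← hdz]; exact hterm)
        _ ≤ ((t⁻¹ : ℝ) : EReal) * (((L d : ℝ) : EReal) - ψ y) := by
            rcases eq_or_ne (ψ y) ⊥ with hb | hb
            · rw [hb, EReal.coe_mul_bot_of_pos (by exact_mod_cast hti), EReal.bot_sub,
                EReal.coe_sub_bot, EReal.coe_mul_top_of_pos (by exact_mod_cast hti)]
            · obtain ⟨q, hq⟩ : ∃ q : ℝ, ψ y = (q : ℝ) :=
                ⟨(ψ y).toReal, (EReal.coe_toReal (hψtop y) hb).symm⟩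
              rw [hq]
              norm_cast
              refine le_of_eq ?_
              field_simp
              ring
end

section
/- Let M be a non-branching geodesic metric space and p > 1. Suppose (x₁,y₁) and (x₂,y₂) are pairs with d(x₁,y₁) > 0, d(x₂,y₂) > 0 which are c_p-cyclically monotone: d(x₁,y₁)^p + d(x₂,y₂)^p ≤ d(x₁,y₂)^p + d(x₂,y₁)^p. If γ₁ is a geodesic from x₁ to y₁ and γ₂ a geodesic from x₂ to y₂ with γ₁(t) = γ₂(t) for some t ∈ (0,1), then (x₁,y₁) = (x₂,y₂). -/
lemma aux_conv {a b t p : ℝ} (ha : 0 < a) (hb : 0 < b) (ht0 : 0 < t) (ht1 : t < 1)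
    (hp : 1 < p)
    (h : a ^ p + b ^ p ≤ (t * a + (1 - t) * b) ^ p + ((1 - t) * a + t * b) ^ p) :
    a = b := by
  by_contra hne
  have hsc := strictConvexOn_rpow hp
  have h1t : (0:ℝ) < 1 - t := by linarith
  have hsum : t + (1 - t) = 1 := by ring
  have h1 : (t * a + (1 - t) * b) ^ p < t * a ^ p + (1 - t) * b ^ p := by
    have := hsc.2 (Set.mem_Ici.2 ha.le) (Set.mem_Ici.2 hb.le) hne ht0 h1t hsum
    simpa [smul_eq_mul] using this
  have hsum' : (1 - t) + t = 1 := by ring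
  have h2 : ((1 - t) * a + t * b) ^ p < (1 - t) * a ^ p + t * b ^ p := by
    have := hsc.2 (Set.mem_Ici.2 ha.le) (Set.mem_Ici.2 hb.le) hne h1t ht0 hsum'
    simpa [smul_eq_mul] using this
  nlinarith

lemma aux_eq {A a p : ℝ} (hA : 0 ≤ A) (hAa : A ≤ a) (hp : 1 < p)
    (h : a ^ p ≤ A ^ p) : A = a := by
  by_contra hne
  have hlt : A < a := lt_of_le_of_ne hAa hne
  exact absurd (Real.rpow_lt_rpow hA hlt (by linarith)) (not_lt.2 h)

theorem stmt10 {M : Type*} [MetricSpace M]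
    (hgeo : ∀ x y : M, ∀ t ∈ Set.Icc (0:ℝ) 1,
      ∃ z : M, dist x z = t * dist x y ∧ dist z y = (1 - t) * dist x y)
    (hnb : ∀ x y y' : M, dist x y = dist x y' → 0 < dist x y →
      (∃ s ∈ Set.Ioo (0:ℝ) 1, ∃ z : M,
        (dist x z = s * dist x y ∧ dist z y = (1 - s) * dist x y) ∧
        (dist x z = s * dist x y' ∧ dist z y' = (1 - s) * dist x y')) → y = y')
    (p : ℝ) (hp : 1 < p)
    (x₁ y₁ x₂ y₂ : M) (h₁ : 0 < dist x₁ y₁) (h₂ : 0 < dist x₂ y₂)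
    (hcm : dist x₁ y₁ ^ p + dist x₂ y₂ ^ p ≤ dist x₁ y₂ ^ p + dist x₂ y₁ ^ p)
    (γ₁ γ₂ : ℝ → M)
    (hγ₁0 : γ₁ 0 = x₁) (hγ₁1 : γ₁ 1 = y₁)
    (hγ₁ : ∀ s ∈ Set.Icc (0:ℝ) 1, ∀ u ∈ Set.Icc (0:ℝ) 1,
      dist (γ₁ s) (γ₁ u) = |s - u| * dist x₁ y₁)
    (hγ₂0 : γ₂ 0 = x₂) (hγ₂1 : γ₂ 1 = y₂)
    (hγ₂ : ∀ s ∈ Set.Icc (0:ℝ) 1, ∀ u ∈ Set.Icc (0:ℝ) 1,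
      dist (γ₂ s) (γ₂ u) = |s - u| * dist x₂ y₂)
    (t : ℝ) (ht : t ∈ Set.Ioo (0:ℝ) 1) (heq : γ₁ t = γ₂ t) :
    x₁ = x₂ ∧ y₁ = y₂ := by
  obtain ⟨ht0, ht1⟩ := ht
  set a := dist x₁ y₁ with ha
  set b := dist x₂ y₂ with hb
  set z := γ₁ t with hz
  have htI : t ∈ Set.Icc (0:ℝ) 1 := ⟨ht0.le, ht1.le⟩
  have h0I : (0:ℝ) ∈ Set.Icc (0:ℝ) 1 := by norm_num
  have h1I : (1:ℝ) ∈ Set.Icc (0:ℝ) 1 := by norm_num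
  have d1 : dist x₁ z = t * a := by
    have := hγ₁ 0 h0I t htI
    rw [hγ₁0] at this; rw [this]; rw [abs_of_nonpos (by linarith)]; ring_nf
  have d2 : dist z y₁ = (1 - t) * a := by
    have := hγ₁ t htI 1 h1I
    rw [hγ₁1] at this; rw [this, abs_of_nonpos (by linarith)]; ring_nf
  have d3 : dist x₂ z = t * b := by
    have := hγ₂ 0 h0I t htI
    rw [hγ₂0, ← heq] at this; rw [this, abs_of_nonpos (by linarith)]; ring_nf
  have d4 : dist z y₂ = (1 - t) * b := by
    have := hγ₂ t htI 1 h1I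
    rw [hγ₂1, ← heq] at this; rw [this, abs_of_nonpos (by linarith)]; ring_nf
  -- triangle inequalities
  have tA : dist x₁ y₂ ≤ t * a + (1 - t) * b := by
    calc dist x₁ y₂ ≤ dist x₁ z + dist z y₂ := dist_triangle _ _ _
    _ = t * a + (1 - t) * b := by rw [d1, d4]
  have tB : dist x₂ y₁ ≤ (1 - t) * a + t * b := by
    have : dist x₂ y₁ ≤ dist x₂ z + dist z y₁ := dist_triangle _ _ _
    rw [d3, d2] at this; linarith
  have hApow : dist x₁ y₂ ^ p ≤ (t * a + (1 - t) * b) ^ p :=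
    Real.rpow_le_rpow dist_nonneg tA (by linarith)
  have hBpow : dist x₂ y₁ ^ p ≤ ((1 - t) * a + t * b) ^ p :=
    Real.rpow_le_rpow dist_nonneg tB (by linarith)
  have hab : a = b := by
    refine aux_conv h₁ h₂ ht0 ht1 hp ?_
    linarith
  -- both cross distances equal a
  have hA : dist x₁ y₂ = a := by
    refine aux_eq dist_nonneg (by rw [hab] at tA ⊢; linarith) hp ?_
    have hBle : dist x₂ y₁ ^ p ≤ a ^ p := by
      refine Real.rpow_le_rpow dist_nonneg ?_ (by linarith)
      rw [hab] at tB ⊢; linarith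
    rw [← hab] at hcm; linarith
  have hB : dist x₂ y₁ = a := by
    refine aux_eq dist_nonneg (by rw [hab] at tB ⊢; linarith) hp ?_
    have hAle : dist x₁ y₂ ^ p ≤ a ^ p := by
      refine Real.rpow_le_rpow dist_nonneg ?_ (by linarith)
      rw [hab] at tA ⊢; linarith
    rw [← hab] at hcm; linarith
  have hy : y₁ = y₂ := by
    refine hnb x₁ y₁ y₂ (by rw [hA]) h₁ ⟨t, ⟨ht0, ht1⟩, z, ⟨d1, d2⟩, ?_, ?_⟩
    · rw [hA]; exact d1
    · rw [hA, d4, hab]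
  have hx : x₁ = x₂ := by
    have hd1 : dist y₁ x₁ = a := by rw [dist_comm]
    have hd2 : dist y₁ x₂ = a := by rw [dist_comm]; exact hB
    refine hnb y₁ x₁ x₂ (by rw [hd1, hd2]) (by rw [hd1]; exact h₁)
      ⟨1 - t, ⟨by linarith, by linarith⟩, z, ⟨?_, ?_⟩, ?_, ?_⟩
    · rw [hd1, dist_comm, d2]
    · rw [hd1, dist_comm, d1]; ring_nf
    · rw [hd2, dist_comm, hy, d4, hab]
    · rw [hd2, dist_comm, d3, hab]; ring_nf
  exact ⟨hx, hy⟩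
end

section
/- Let (M,d) be a geodesic metric space, γ a unit-speed geodesic ray with Busemann function b, and L : [0,∞) → [0,∞) a convex increasing function such that there exists r ≥ 0 with L*(1) = r − L(r) (where L* is the Legendre transform of L). Then b is c_L-concave, i.e. b = (b^{c_L})^{\bar{c}_L} for the cost c_L(x,y) = L(d(x,y)). -/
open Filter Topology

theorem stmt12 {M : Type*} [MetricSpace M]
    (hgeo : ∀ x y : M, ∀ t ∈ Set.Icc (0:ℝ) 1,
      ∃ z : M, dist x z = t * dist x y ∧ dist z y = (1 - t) * dist x y)
    (γ : ℝ → M) (hray : ∀ s t : ℝ, 0 ≤ s → s ≤ t → dist (γ s) (γ t) = t - s)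
    (b : M → ℝ)
    (hb : ∀ x : M, Tendsto (fun t => dist x (γ t) - t) atTop (𝓝 (b x)))
    (L : ℝ → ℝ) (hconv : ConvexOn ℝ (Set.Ici 0) L)
    (hmono : MonotoneOn L (Set.Ici 0)) (hL0 : L 0 = 0)
    (hr : ∃ r : ℝ, 0 ≤ r ∧ ∀ x : ℝ, 0 ≤ x → x - L x ≤ r - L r) :
    ∀ x : M, (b x : EReal) =
      ⨅ y : M, ((L (dist x y) : ℝ) : EReal) -
        (⨅ z : M, ((L (dist z y) : ℝ) : EReal) - (b z : EReal)) := by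
  obtain ⟨r, hr0, hrmax⟩ := hr
  -- b is 1-Lipschitz
  have blip : ∀ y z : M, b z ≤ b y + dist z y := by
    intro y z
    have h2 : Tendsto (fun t => dist z y + (dist y (γ t) - t)) atTop
        (𝓝 (dist z y + b y)) := tendsto_const_nhds.add (hb y)
    have := le_of_tendsto_of_tendsto' (hb z) h2 (fun t => by
      have := dist_triangle z y (γ t); linarith)
    linarith
  -- upper bound on b along the ray
  have bup : ∀ (y : M) (t : ℝ), 0 ≤ t → b y ≤ dist y (γ t) - t := by
    intro y t ht
    refine le_of_tendsto (hb y) ?_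
    filter_upwards [eventually_ge_atTop t] with s hs
    have hd := hray t s ht hs
    have := dist_triangle y (γ t) (γ s)
    linarith
  -- lower bound on the inner infimum
  have Φlb : ∀ y : M, ((L r - r - b y : ℝ) : EReal) ≤
      ⨅ z : M, ((L (dist z y) : ℝ) : EReal) - (b z : EReal) := by
    intro y
    refine le_iInf fun z => ?_
    rw [← EReal.coe_sub]
    apply EReal.coe_le_coe_iff.2
    have h1 := blip y z
    have h2 := hrmax (dist z y) dist_nonneg
    linarith
  intro x
  refine le_antisymm (le_iInf fun y => ?_) ?_
  · -- b x ≤ each outer term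
    have h1 : (⨅ z : M, ((L (dist z y) : ℝ) : EReal) - (b z : EReal)) ≤
        ((L (dist x y) - b x : ℝ) : EReal) := by
      simpa [EReal.coe_sub] using
        iInf_le (fun z : M => ((L (dist z y) : ℝ) : EReal) - (b z : EReal)) x
    calc (b x : EReal)
        = ((L (dist x y) : ℝ) : EReal) - ((L (dist x y) - b x : ℝ) : EReal) := by
          rw [← EReal.coe_sub]; congr 1; ring
      _ ≤ _ := EReal.sub_le_sub le_rfl h1
  · -- the infimum is at most b x
    refine ge_of_tendsto (EReal.tendsto_coe.2 (hb x)) ?_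
    filter_upwards [eventually_ge_atTop (max 0 (r + dist x (γ 0)) + 1)] with t ht
    have ht0 : (0:ℝ) ≤ t := by
      have := le_max_left 0 (r + dist x (γ 0)); linarith
    set D := dist x (γ t) with hD
    have hDt : t ≤ dist x (γ 0) + D := by
      have h0 := hray 0 t le_rfl ht0
      have := dist_triangle (γ 0) x (γ t)
      simp only [sub_zero] at h0
      rw [dist_comm (γ 0) x] at this
      linarith
    have hDr : r + 1 ≤ D := by
      have := le_max_right 0 (r + dist x (γ 0)); linarith
    have hDpos : 0 < D := by linarith
    obtain ⟨z, hz1, hz2⟩ := hgeo x (γ t) (r / D)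
      ⟨div_nonneg hr0 hDpos.le, by rw [div_le_one hDpos]; linarith⟩
    rw [← hD, div_mul_cancel₀ r hDpos.ne'] at hz1
    have hz2' : dist z (γ t) = D - r := by
      rw [hz2, ← hD]; field_simp
    have hbz : b z ≤ D - r - t := by
      have := bup z t ht0; rw [hz2'] at this; linarith
    calc (⨅ y : M, ((L (dist x y) : ℝ) : EReal) -
          (⨅ z : M, ((L (dist z y) : ℝ) : EReal) - (b z : EReal)))
        ≤ ((L (dist x z) : ℝ) : EReal) -
          (⨅ w : M, ((L (dist w z) : ℝ) : EReal) - (b w : EReal)) :=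
          iInf_le _ z
      _ ≤ ((L r : ℝ) : EReal) - ((L r - r - b z : ℝ) : EReal) := by
          rw [hz1]; exact EReal.sub_le_sub le_rfl (Φlb z)
      _ = ((r + b z : ℝ) : EReal) := by rw [← EReal.coe_sub]; congr 1; ring
      _ ≤ ((D - t : ℝ) : EReal) := EReal.coe_le_coe_iff.2 (by linarith)
end

section
/- Let f be Lipschitz on a compact metric measure space (M,d,μ) (μ a probability measure) with ∫ f^q dμ = 1, f > 0, and assume the log-Sobolev inequality ∫ ρ log ρ dμ ≤ (1/(2K))·(∫ |D⁻ρ|^q/ρ^{q−1} dμ)^{2/q} holds for all positive Lipschitz probability densities ρ. Then (∫ f^q log f^q dμ)^{1/2} ≤ (q/√(2K))·(∫ |D⁻f|^q dμ)^{1/q}. -/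
/-!
Since `M` is compact and `f > 0` is Lipschitz, `f` takes values in a compact subset of
`(0, ∞)`, on which `t ↦ t ^ q` is `C¹`; hence `ρ = f ^ q` is a positive Lipschitz probability
density and the log-Sobolev inequality applies to it. The chain rule
`|D⁻ f ^ q| = q f ^ (q - 1) |D⁻ f|` turns `|D⁻ρ| ^ q / ρ ^ (q - 1)` into `q ^ q |D⁻ f| ^ q`, and
taking square roots gives the claim.
-/

open MeasureTheory Filter Topology
open scoped NNReal

/-- The descending slope `|D⁻f|(x) = limsup_{y→x} [f(x)-f(y)]₊ / d(y,x)`. -/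
noncomputable def descSlope {M : Type*} [MetricSpace M] (f : M → ℝ) (x : M) : ℝ :=
  Filter.limsup (fun y => max (f x - f y) 0 / dist y x) (𝓝[≠] x)

lemma limsup_mul_eq_of_tendsto {ι : Type*} {l : Filter ι} [l.NeBot] {u v : ι → ℝ} {L : ℝ}
    (hu : Tendsto u l (𝓝 L)) (hu0 : 0 ≤ᶠ[l] u) (hv0 : 0 ≤ᶠ[l] v)
    (hv : IsBoundedUnder (· ≤ ·) l v) :
    limsup (u * v) l = L * limsup v l := by
  have hbu : IsBoundedUnder (· ≤ ·) l u := hu.isBoundedUnder_le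
  apply le_antisymm
  · simpa only [hu.limsup_eq] using limsup_mul_le hu0.frequently hbu hv0 hv
  · simpa only [hu.liminf_eq, mul_comm] using le_limsup_mul hv0.frequently hv hu0 hbu

lemma sqrt_mul_rpow_two_div {q : ℝ} (hq : 0 < q) (c : ℝ) {I : ℝ} (hI : 0 ≤ I) :
    √(c * (q ^ q * I) ^ (2 / q)) = q * √c * I ^ (1 / q) := by
  have hsq : (q ^ q * I) ^ (2 / q) = (q * I ^ (1 / q)) ^ 2 := by
    rw [Real.mul_rpow (by positivity) hI, ← Real.rpow_mul hq.le, mul_div_cancel₀ _ hq.ne',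
      mul_pow, ← Real.rpow_natCast (I ^ (1 / q)), ← Real.rpow_mul hI]
    norm_num [div_eq_mul_inv, mul_comm]
  rw [hsq, Real.sqrt_mul' _ (sq_nonneg _), Real.sqrt_sq (by positivity)]
  ring

section DescSlope

variable {M : Type*} [MetricSpace M] {f : M → ℝ} {C : ℝ≥0}

-- At an isolated point the limsup is taken over `⊥`, where in `ℝ` it is the junk value
-- `sInf univ = 0`.
lemma descSlope_of_nhdsNE_eq_bot {x : M} (hx : 𝓝[≠] x = ⊥) (f : M → ℝ) :
    descSlope f x = 0 := by
  simp [descSlope, hx, limsup_eq]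

lemma descQuotient_le (hf : LipschitzWith C f) (x y : M) :
    max (f x - f y) 0 / dist y x ≤ C := by
  rcases eq_or_ne y x with rfl | hyx
  · simp
  rw [div_le_iff₀ (dist_pos.2 hyx)]
  refine max_le ?_ (by positivity)
  calc f x - f y ≤ dist (f x) (f y) := (le_abs_self _).trans (Real.dist_eq _ _).ge
    _ ≤ C * dist x y := hf.dist_le_mul x y
    _ = C * dist y x := by rw [dist_comm]

lemma isBoundedUnder_descQuotient (hf : LipschitzWith C f) (x : M) :
    IsBoundedUnder (· ≤ ·) (𝓝[≠] x) fun y => max (f x - f y) 0 / dist y x :=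
  isBoundedUnder_of ⟨C, descQuotient_le hf x⟩

lemma descSlope_nonneg (hf : LipschitzWith C f) (x : M) : 0 ≤ descSlope f x := by
  rcases (𝓝[≠] x).eq_or_neBot with hx | hx
  · rw [descSlope_of_nhdsNE_eq_bot hx]
  · exact le_limsup_of_frequently_le (Frequently.of_forall fun y => by positivity)
      (isBoundedUnder_descQuotient hf x)

theorem descSlope_comp_of_hasDerivAt (hf : LipschitzWith C f) {x : M} {φ : ℝ → ℝ} {L : ℝ}
    (hφ : HasDerivAt φ L (f x)) (hL : 0 < L) :
    descSlope (fun y => φ (f y)) x = L * descSlope f x := by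
  rcases (𝓝[≠] x).eq_or_neBot with hx | hx
  · simp [descSlope_of_nhdsNE_eq_bot hx]
  -- The quotient for `φ ∘ f` is `dslope φ (f x) (f y)` times the one for `f`, and that factor
  -- tends to `L > 0`, so it is eventually nonnegative and commutes with `max · 0`.
  set r : M → ℝ := fun y => dslope φ (f x) (f y)
  have hr : Tendsto r (𝓝[≠] x) (𝓝 L) := by
    have := (continuousAt_dslope_same.2 hφ.differentiableAt).tendsto.comp
      (hf.continuous.tendsto x)
    rw [dslope_same, hφ.deriv] at this
    exact this.mono_left nhdsWithin_le_nhds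
  have hr0 : 0 ≤ᶠ[𝓝[≠] x] r := (hr.eventually (lt_mem_nhds hL)).mono fun _ hy => hy.le
  have hfactor : (fun y => max (φ (f x) - φ (f y)) 0 / dist y x)
      =ᶠ[𝓝[≠] x] r * fun y => max (f x - f y) 0 / dist y x := by
    filter_upwards [hr0] with y hy
    have hdslope := sub_smul_dslope φ (f x) (f y)
    rw [smul_eq_mul] at hdslope
    simp only [Pi.mul_apply, ← mul_div_assoc, mul_max_of_nonneg _ _ hy, mul_zero]
    congr 2
    linarith
  unfold descSlope
  rw [limsup_congr hfactor, limsup_mul_eq_of_tendsto hr hr0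
    (Eventually.of_forall fun y => by positivity) (isBoundedUnder_descQuotient hf x)]

lemma descSlope_rpow (hf : LipschitzWith C f) {x : M} (hx : 0 < f x) {q : ℝ} (hq : 0 < q) :
    descSlope (fun y => f y ^ q) x = q * f x ^ (q - 1) * descSlope f x :=
  descSlope_comp_of_hasDerivAt (φ := fun t => t ^ q) hf
    (Real.hasDerivAt_rpow_const (Or.inl hx.ne')) (by positivity)

lemma descSlope_rpow_rpow_div (hf : LipschitzWith C f) {x : M} (hx : 0 < f x) {q : ℝ}
    (hq : 0 < q) :
    descSlope (fun y => f y ^ q) x ^ q / (f x ^ q) ^ (q - 1) = q ^ q * descSlope f x ^ q := by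
  have hs := descSlope_nonneg hf x
  rw [descSlope_rpow hf hx hq, Real.mul_rpow (by positivity) hs,
    Real.mul_rpow hq.le (by positivity), ← Real.rpow_mul hx.le, ← Real.rpow_mul hx.le,
    mul_comm (q - 1) q]
  field_simp

lemma LipschitzWith.exists_lipschitzWith_comp_of_contDiffOn [CompactSpace M]
    (hf : LipschitzWith C f) {φ : ℝ → ℝ} {U : Set ℝ} (hU : Convex ℝ U)
    (hφ : ContDiffOn ℝ 1 φ U) (hfU : ∀ x, f x ∈ U) :
    ∃ K, LipschitzWith K fun x => φ (f x) := by
  obtain ⟨K, hK⟩ := ((hφ.locallyLipschitzOn hU).mono (Set.range_subset_iff.2 hfU))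
    |>.exists_lipschitzOnWith_of_compact (isCompact_range hf.continuous)
  exact ⟨K * C, lipschitzOnWith_univ.1
    (hK.comp hf.lipschitzOnWith fun x _ => Set.mem_range_self x)⟩

lemma LipschitzWith.exists_lipschitzWith_rpow [CompactSpace M] (hf : LipschitzWith C f)
    (hpos : ∀ x, 0 < f x) (q : ℝ) : ∃ K, LipschitzWith K fun x => f x ^ q :=
  hf.exists_lipschitzWith_comp_of_contDiffOn (convex_Ioi 0)
    (fun _ ht => (Real.contDiffAt_rpow_const_of_ne (ne_of_gt ht)).contDiffWithinAt) hpos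

end DescSlope

theorem stmt16_general {M : Type*} [MetricSpace M] [CompactSpace M]
    [MeasurableSpace M]
    (μ : Measure M)
    (K q : ℝ) (hq : 1 < q)
    (hls : ∀ ρ : M → ℝ, (∃ C : NNReal, LipschitzWith C ρ) → (∀ x, 0 < ρ x) →
      (∫ x, ρ x ∂μ) = 1 →
      ∫ x, ρ x * Real.log (ρ x) ∂μ ≤
        (1 / (2 * K)) * (∫ x, descSlope ρ x ^ q / ρ x ^ (q - 1) ∂μ) ^ (2 / q))
    (f : M → ℝ) (hLip : ∃ C : NNReal, LipschitzWith C f)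
    (hpos : ∀ x, 0 < f x) (hnorm : (∫ x, f x ^ q ∂μ) = 1) :
    (∫ x, f x ^ q * Real.log (f x ^ q) ∂μ) ^ ((1:ℝ)/2) ≤
      (q / Real.sqrt (2 * K)) * (∫ x, descSlope f x ^ q ∂μ) ^ ((1:ℝ)/q) := by
  obtain ⟨C, hf⟩ := hLip
  have hq0 : 0 < q := by linarith
  have hLS := hls (fun x => f x ^ q) (hf.exists_lipschitzWith_rpow hpos q)
    (fun x => Real.rpow_pos_of_pos (hpos x) q) hnorm
  simp only [descSlope_rpow_rpow_div hf (hpos _) hq0, integral_const_mul] at hLS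
  have hI : 0 ≤ ∫ x, descSlope f x ^ q ∂μ :=
    integral_nonneg fun x => Real.rpow_nonneg (descSlope_nonneg hf x) q
  rw [← Real.sqrt_eq_rpow]
  calc _ ≤ _ := Real.sqrt_le_sqrt hLS
    _ = _ := by
      rw [sqrt_mul_rpow_two_div hq0 _ hI, one_div (2 * K), Real.sqrt_inv, div_eq_mul_inv q]

theorem stmt16 {M : Type*} [MetricSpace M] [CompactSpace M]
    [MeasurableSpace M] [BorelSpace M]
    (μ : Measure M) [IsProbabilityMeasure μ]
    (K q : ℝ) (hK : 0 < K) (hq : 1 < q)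
    (hls : ∀ ρ : M → ℝ, (∃ C : NNReal, LipschitzWith C ρ) → (∀ x, 0 < ρ x) →
      (∫ x, ρ x ∂μ) = 1 →
      ∫ x, ρ x * Real.log (ρ x) ∂μ ≤
        (1 / (2 * K)) * (∫ x, descSlope ρ x ^ q / ρ x ^ (q - 1) ∂μ) ^ (2 / q))
    (f : M → ℝ) (hLip : ∃ C : NNReal, LipschitzWith C f)
    (hpos : ∀ x, 0 < f x) (hnorm : (∫ x, f x ^ q ∂μ) = 1) :
    (∫ x, f x ^ q * Real.log (f x ^ q) ∂μ) ^ ((1:ℝ)/2) ≤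
      (q / Real.sqrt (2 * K)) * (∫ x, descSlope f x ^ q ∂μ) ^ ((1:ℝ)/q) :=
  stmt16_general μ K q hq hls f hLip hpos hnorm
end

section
/- Let (M,d) be a metric space, p > 1, and φ a c_p-concave function that is locally Lipschitz near x ∈ M. Then the ascending slope satisfies |D⁺φ|(x) ≤ inf_{y ∈ ∂^{c_p}φ(x)} d(x,y)^{p−1}, where ∂^{c_p}φ(x) is the c_p-subdifferential. -/
/-!
If `y` lies in the `c_p`-subdifferential of `φ` at `x`, then testing the infimum defining
`φ^{c_p}(y)` at `z` and using the triangle inequality gives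
`φ z - φ x ≤ ((d(z,x) + d(x,y))^p - d(x,y)^p) / p`. The right-hand side is
`d(z,x) · d(x,y)^{p-1} + o(d(z,x))`, because `d(x,y)^{p-1}` is the derivative of `s ↦ s^p / p`
at `s = d(x,y)`, so the difference quotients defining the ascending slope are eventually
dominated by quantities tending to `d(x,y)^{p-1}`.
-/

open Filter Topology

/-- The ascending slope `|D⁺f|(x) = limsup_{y→x} [f(y)-f(x)]₊ / d(y,x)`. -/
noncomputable def ascSlope {M : Type*} [MetricSpace M] (f : M → ℝ) (x : M) : ℝ :=
  Filter.limsup (fun y => max (f y - f x) 0 / dist y x) (𝓝[≠] x)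

section CpTransform

variable {M : Type*} [MetricSpace M]

noncomputable def cpTransform (p : ℝ) (φ : M → EReal) (y : M) : EReal :=
  ⨅ z, ((dist z y ^ p / p : ℝ) : EReal) - φ z

def cpSubdifferential (p : ℝ) (φ : M → EReal) (x : M) : Set M :=
  {y | φ x + cpTransform p φ y = ((dist x y ^ p / p : ℝ) : EReal)}

theorem sub_le_of_mem_cpSubdifferential {p : ℝ} (hp : 0 < p) {φ : M → EReal} {x y z : M}
    (hy : y ∈ cpSubdifferential p φ x) {u v : ℝ} (hx : φ x = u) (hz : φ z = v) :
    v - u ≤ ((dist z x + dist x y) ^ p - dist x y ^ p) / p := by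
  have hcp : dist x y ^ p / p ≤ u + (dist z y ^ p / p - v) := by
    have := add_le_add_right (iInf_le (fun w => ((dist w y ^ p / p : ℝ) : EReal) - φ w) z) (φ x)
    rwa [← cpTransform, hy, hx, hz, ← EReal.coe_sub, ← EReal.coe_add,
      EReal.coe_le_coe_iff] at this
  have htri : dist z y ^ p ≤ (dist z x + dist x y) ^ p :=
    Real.rpow_le_rpow dist_nonneg (dist_triangle z x y) hp.le
  calc v - u ≤ (dist z y ^ p - dist x y ^ p) / p := by rw [sub_div]; linarith
    _ ≤ ((dist z x + dist x y) ^ p - dist x y ^ p) / p := by gcongr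

end CpTransform

theorem tendsto_rpow_add_sub_div_nhdsGT {p : ℝ} (hp : 1 ≤ p) (b : ℝ) :
    Tendsto (fun t => ((b + t) ^ p - b ^ p) / t) (𝓝[>] 0) (𝓝 (p * b ^ (p - 1))) := by
  simpa [div_eq_inv_mul] using
    (Real.hasDerivAt_rpow_const (x := b) (Or.inr hp)).tendsto_slope_zero_right

section AscSlope

variable {M : Type*} [MetricSpace M]

theorem tendsto_dist_nhdsNE_nhdsGT (x : M) :
    Tendsto (fun z => dist z x) (𝓝[≠] x) (𝓝[>] 0) := by
  refine tendsto_nhdsWithin_iff.2 ⟨?_, ?_⟩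
  · exact ((continuous_id.dist continuous_const).tendsto' x 0 (dist_self x)).mono_left
      nhdsWithin_le_nhds
  · filter_upwards [self_mem_nhdsWithin] with z hz using dist_pos.2 hz

theorem ascSlope_le_of_tendsto {f : M → ℝ} {x : M} {g : ℝ → ℝ} {L : ℝ} (hL : 0 ≤ L)
    (hg : Tendsto (fun t => g t / t) (𝓝[>] 0) (𝓝 L))
    (hfg : ∀ᶠ z in 𝓝[≠] x, f z - f x ≤ g (dist z x)) : ascSlope f x ≤ L := by
  rcases (𝓝[≠] x).eq_or_neBot with hbot | hne
  · -- at an isolated point the `limsup` is taken along `⊥`, where it is `sInf univ = 0`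
    simp [ascSlope, hbot, Filter.limsup, Filter.limsSup, hL]
  have hmax : Tendsto (fun z => max (g (dist z x) / dist z x) 0) (𝓝[≠] x) (𝓝 L) := by
    simpa only [max_eq_left hL, Function.comp_def] using
      (hg.comp (tendsto_dist_nhdsNE_nhdsGT x)).max (tendsto_const_nhds (x := (0 : ℝ)))
  refine (limsup_le_limsup ?_ ?_ hmax.isBoundedUnder_le).trans_eq hmax.limsup_eq
  · filter_upwards [hfg] with z hz
    rw [← max_div_div_right dist_nonneg, zero_div]
    exact max_le_max_right 0 (div_le_div_of_nonneg_right hz dist_nonneg)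
  · exact isCoboundedUnder_le_of_le _ fun z => div_nonneg (le_max_right _ _) dist_nonneg

end AscSlope

theorem stmt17_general {M : Type*} [MetricSpace M] (p : ℝ) (hp : 1 < p)
    (φ : M → EReal)
    (x : M)
    (hloc : ∃ ε > (0:ℝ), ∃ C : ℝ,
      (∀ a ∈ Metric.ball x ε, ∃ v : ℝ, φ a = (v : EReal)) ∧
      (∀ a ∈ Metric.ball x ε, ∀ b ∈ Metric.ball x ε,
        |(φ a).toReal - (φ b).toReal| ≤ C * dist a b)) :
    ∀ y : M,
      φ x + (⨅ z : M, (((dist z y) ^ p / p : ℝ) : EReal) - φ z) =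
        (((dist x y) ^ p / p : ℝ) : EReal) →
      ascSlope (fun z => (φ z).toReal) x ≤ dist x y ^ (p - 1) := by
  intro y hy
  obtain ⟨ε, hε, -, hfin, -⟩ := hloc
  obtain ⟨u, hu⟩ := hfin x (Metric.mem_ball_self hε)
  have hp0 : 0 < p := zero_lt_one.trans hp
  refine ascSlope_le_of_tendsto (g := fun t => ((dist x y + t) ^ p - dist x y ^ p) / p)
    (Real.rpow_nonneg dist_nonneg _) ?_ ?_
  · simpa only [mul_div_cancel_left₀ _ hp0.ne', div_right_comm] using
      (tendsto_rpow_add_sub_div_nhdsGT hp.le (dist x y)).div_const p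
  · filter_upwards [nhdsWithin_le_nhds (Metric.ball_mem_nhds x hε)] with z hz
    obtain ⟨v, hv⟩ := hfin z hz
    simpa only [hu, hv, EReal.toReal_coe, add_comm (dist x y)] using
      sub_le_of_mem_cpSubdifferential hp0 hy hu hv

theorem stmt17 {M : Type*} [MetricSpace M] (p : ℝ) (hp : 1 < p)
    (φ : M → EReal)
    (hconc : ∃ ψ : M → EReal,
      ∀ z : M, φ z = ⨅ y : M, (((dist z y) ^ p / p : ℝ) : EReal) - ψ y)
    (x : M)
    (hloc : ∃ ε > (0:ℝ), ∃ C : ℝ,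
      (∀ a ∈ Metric.ball x ε, ∃ v : ℝ, φ a = (v : EReal)) ∧
      (∀ a ∈ Metric.ball x ε, ∀ b ∈ Metric.ball x ε,
        |(φ a).toReal - (φ b).toReal| ≤ C * dist a b)) :
    ∀ y : M,
      φ x + (⨅ z : M, (((dist z y) ^ p / p : ℝ) : EReal) - φ z) =
        (((dist x y) ^ p / p : ℝ) : EReal) →
      ascSlope (fun z => (φ z).toReal) x ≤ dist x y ^ (p - 1) :=
  stmt17_general p hp φ x hloc
end

section
/- Let L : [0,∞) → [0,∞) be convex increasing with L(0) = 0 and suppose L(R) − L(R − ε) → ∞ as R → ∞ for every ε > 0. Let M be a proper geodesic metric space and φ a c_L-concave function on M with interior of {φ > −∞} containing a point x̄ and a ball B_{2r}(x̄) on which φ is real-valued and bounded. Then there exists C > 0 such that for every x ∈ B_r(x̄), any minimizing sequence y_n (i.e. c_L(x,y_n) − φ^{c_L}(y_n) → φ(x)) is eventually contained in the ball B_C(x̄). -/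
/-!
If `y` is far from `x`, let `z` be the point at distance `r` from `x` on a geodesic to `y`.
Testing the infimum defining `φ^c(y)` at `z` gives
`L(d(x,y)) - φ^c(y) ≥ L(d(x,y)) - L(d(x,y) - r) + φ(z)`.
Near a minimizing sequence the left side is close to `φ(x) ≤ B`, while `φ(z) ≥ -B` because `z`
stays in `B_{2r}(x̄)`; so `L(R) - L(R - r) ≤ 2B + o(1)` along `R = d(x, y_n)`, which the growth
of `L` only allows for bounded `R`.
-/

open Filter Topology

section

variable {M : Type*} [MetricSpace M]

theorem exists_dist_eq_of_le_dist
    (hgeo : ∀ x y : M, ∀ t ∈ Set.Icc (0:ℝ) 1,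
      ∃ z : M, dist x z = t * dist x y ∧ dist z y = (1 - t) * dist x y)
    {x y : M} {r : ℝ} (hr : 0 ≤ r) (hrd : r ≤ dist x y) :
    ∃ z, dist x z = r ∧ dist z y = dist x y - r := by
  obtain ⟨z, hxz, hzy⟩ := hgeo x y (r / dist x y)
    ⟨div_nonneg hr dist_nonneg, div_le_one_of_le₀ hrd dist_nonneg⟩
  have hcancel : r / dist x y * dist x y = r :=
    div_mul_cancel_of_imp fun h => le_antisymm (h ▸ hrd) hr
  exact ⟨z, hxz.trans hcancel, by rw [hzy, sub_mul, one_mul, hcancel]⟩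

noncomputable def cTransform (L : ℝ → ℝ) (φ : M → EReal) (y : M) : EReal :=
  ⨅ z : M, ((L (dist z y) : ℝ) : EReal) - φ z

theorem cTransform_le_of_le {L : ℝ → ℝ} {φ : M → EReal} {y z : M} {m : ℝ}
    (hz : (m : EReal) ≤ φ z) : cTransform L φ y ≤ ((L (dist z y) - m : ℝ) : EReal) :=
  calc cTransform L φ y ≤ ((L (dist z y) : ℝ) : EReal) - φ z := iInf_le _ z
    _ ≤ ((L (dist z y) - m : ℝ) : EReal) := by
      rw [EReal.coe_sub]; exact EReal.sub_le_sub le_rfl hz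

theorem dist_lt_of_sub_cTransform_lt
    (hgeo : ∀ x y : M, ∀ t ∈ Set.Icc (0:ℝ) 1,
      ∃ z : M, dist x z = t * dist x y ∧ dist z y = (1 - t) * dist x y)
    {L : ℝ → ℝ} {φ : M → EReal} {x y : M} {r m K R₀ : ℝ} (hr : 0 ≤ r)
    (hφ : ∀ z ∈ Metric.sphere x r, (m : EReal) ≤ φ z)
    (hL : ∀ R ≥ R₀, K - m ≤ L R - L (R - r))
    (hlt : ((L (dist x y) : ℝ) : EReal) - cTransform L φ y < K) :
    dist x y < max R₀ r := by
  by_contra! hd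
  obtain ⟨z, hxz, hzy⟩ := exists_dist_eq_of_le_dist hgeo hr ((le_max_right _ _).trans hd)
  have hz : (m : EReal) ≤ φ z := hφ z (by rw [Metric.mem_sphere, dist_comm, hxz])
  have htest : ((L (dist x y) - (L (dist x y - r) - m) : ℝ) : EReal) ≤
      ((L (dist x y) : ℝ) : EReal) - cTransform L φ y := by
    rw [EReal.coe_sub]
    exact EReal.sub_le_sub le_rfl (hzy ▸ cTransform_le_of_le hz)
  have hsmall : L (dist x y) - (L (dist x y - r) - m) < K := by
    exact_mod_cast htest.trans_lt hlt
  linarith [hL _ ((le_max_left _ _).trans hd)]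

end

theorem stmt18_general {M : Type*} [MetricSpace M]
    (hgeo : ∀ x y : M, ∀ t ∈ Set.Icc (0:ℝ) 1,
      ∃ z : M, dist x z = t * dist x y ∧ dist z y = (1 - t) * dist x y)
    (L : ℝ → ℝ)
    (hLinf : ∀ ε > (0:ℝ), Tendsto (fun R => L R - L (R - ε)) atTop atTop)
    (φ : M → EReal)
    (xb : M) (r : ℝ) (hr : 0 < r)
    (hreal : ∀ a ∈ Metric.ball xb (2 * r), ∃ v : ℝ, φ a = (v : EReal))
    (hbdd : ∃ B : ℝ, ∀ a ∈ Metric.ball xb (2 * r), |(φ a).toReal| ≤ B) :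
    ∃ C > (0:ℝ), ∀ x ∈ Metric.ball xb r, ∀ y : ℕ → M,
      Tendsto (fun n => ((L (dist x (y n)) : ℝ) : EReal) -
          (⨅ z : M, ((L (dist z (y n)) : ℝ) : EReal) - φ z))
        atTop (𝓝 (φ x)) →
      ∃ N : ℕ, ∀ n ≥ N, y n ∈ Metric.ball xb C := by
  obtain ⟨B, hB⟩ := hbdd
  have hφB : ∀ a ∈ Metric.ball xb (2 * r), ((-B : ℝ) : EReal) ≤ φ a ∧ φ a ≤ B := by
    intro a ha
    obtain ⟨v, hv⟩ := hreal a ha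
    have hvB := abs_le.1 (by simpa [hv] using hB a ha)
    rw [hv]
    exact ⟨EReal.coe_le_coe hvB.1, EReal.coe_le_coe hvB.2⟩
  obtain ⟨R₀, hR₀⟩ := eventually_atTop.1 ((hLinf r hr).eventually_ge_atTop (2 * B + 1))
  refine ⟨max R₀ r + r, by linarith [le_max_right R₀ r], fun x hx y hy => ?_⟩
  rw [Metric.mem_ball] at hx
  have hsphere : ∀ z ∈ Metric.sphere x r, ((-B : ℝ) : EReal) ≤ φ z := fun z hz =>
    (hφB z (by rw [Metric.mem_ball]; linarith [dist_triangle z x xb, Metric.mem_sphere.1 hz])).1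
  have hφx : φ x < ((B + 1 : ℝ) : EReal) :=
    (hφB x (by rw [Metric.mem_ball]; linarith)).2.trans_lt (EReal.coe_lt_coe (by linarith))
  refine eventually_atTop.1 ?_
  filter_upwards [hy.eventually_lt_const hφx] with n hn
  have hnear := dist_lt_of_sub_cTransform_lt hgeo hr.le hsphere
    (fun R hR => by linarith [hR₀ R hR]) hn
  rw [Metric.mem_ball]
  linarith [dist_triangle (y n) x xb, dist_comm (y n) x]

theorem stmt18 {M : Type*} [MetricSpace M] [ProperSpace M]
    (hgeo : ∀ x y : M, ∀ t ∈ Set.Icc (0:ℝ) 1,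
      ∃ z : M, dist x z = t * dist x y ∧ dist z y = (1 - t) * dist x y)
    (L : ℝ → ℝ) (hconv : ConvexOn ℝ (Set.Ici 0) L)
    (hmono : MonotoneOn L (Set.Ici 0)) (hL0 : L 0 = 0)
    (hLinf : ∀ ε > (0:ℝ), Tendsto (fun R => L R - L (R - ε)) atTop atTop)
    (φ : M → EReal)
    (hconc : ∃ ψ : M → EReal,
      ∀ x : M, φ x = ⨅ y : M, ((L (dist x y) : ℝ) : EReal) - ψ y)
    (xb : M) (r : ℝ) (hr : 0 < r)
    (hmem : xb ∈ interior {z : M | φ z ≠ ⊥})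
    (hreal : ∀ a ∈ Metric.ball xb (2 * r), ∃ v : ℝ, φ a = (v : EReal))
    (hbdd : ∃ B : ℝ, ∀ a ∈ Metric.ball xb (2 * r), |(φ a).toReal| ≤ B) :
    ∃ C > (0:ℝ), ∀ x ∈ Metric.ball xb r, ∀ y : ℕ → M,
      Tendsto (fun n => ((L (dist x (y n)) : ℝ) : EReal) -
          (⨅ z : M, ((L (dist z (y n)) : ℝ) : EReal) - φ z))
        atTop (𝓝 (φ x)) →
      ∃ N : ℕ, ∀ n ≥ N, y n ∈ Metric.ball xb C :=
  stmt18_general hgeo L hLinf φ xb r hr hreal hbdd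
end

section
/- Let L : [0,∞) → [0,∞) be strictly convex increasing with L(0) = 0. Suppose π is a coupling whose support is c_L-cyclically monotone of order 2, M is a non-branching geodesic space, and (x₁,y₁), (x₂,y₂) are in the support with common t-intermediate point z ∈ Z_t(x₁,y₁) ∩ Z_t(x₂,y₂) for some t ∈ (0,1). Then d(x₁,y₁) = d(x₂,y₂) and (x₁,y₁) = (x₂,y₂). -/
theorem stmt19 {M : Type*} [MetricSpace M]
    (hgeo : ∀ x y : M, ∀ t ∈ Set.Icc (0:ℝ) 1,
      ∃ z : M, dist x z = t * dist x y ∧ dist z y = (1 - t) * dist x y)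
    (hnb : ∀ x y y' : M, dist x y = dist x y' → 0 < dist x y →
      (∃ s ∈ Set.Ioo (0:ℝ) 1, (Zt s x y ∩ Zt s x y').Nonempty) → y = y')
    (L : ℝ → ℝ) (hconv : StrictConvexOn ℝ (Set.Ici 0) L)
    (hmono : StrictMonoOn L (Set.Ici 0)) (hL0 : L 0 = 0)
    (x₁ y₁ x₂ y₂ : M)
    (hcm : L (dist x₁ y₁) + L (dist x₂ y₂) ≤ L (dist x₁ y₂) + L (dist x₂ y₁))
    (t : ℝ) (ht : t ∈ Set.Ioo (0:ℝ) 1)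
    (z : M) (hz : z ∈ Zt t x₁ y₁ ∩ Zt t x₂ y₂) :
    dist x₁ y₁ = dist x₂ y₂ ∧ x₁ = x₂ ∧ y₁ = y₂ := by
  obtain ⟨⟨hx1z, hzy1⟩, ⟨hx2z, hzy2⟩⟩ := hz
  obtain ⟨ht0, ht1⟩ := ht
  set a := dist x₁ y₁ with ha
  set b := dist x₂ y₂ with hb
  have ha0 : (0:ℝ) ≤ a := dist_nonneg
  have hb0 : (0:ℝ) ≤ b := dist_nonneg
  have ht0' : (0:ℝ) < 1 - t := by linarith
  have hd12 : dist x₁ y₂ ≤ t*a + (1-t)*b := by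
    calc dist x₁ y₂ ≤ dist x₁ z + dist z y₂ := dist_triangle _ _ _
      _ = t*a + (1-t)*b := by rw [hx1z, hzy2]
  have hd21 : dist x₂ y₁ ≤ t*b + (1-t)*a := by
    calc dist x₂ y₁ ≤ dist x₂ z + dist z y₁ := dist_triangle _ _ _
      _ = t*b + (1-t)*a := by rw [hx2z, hzy1]
  have hcomb0 : (0:ℝ) ≤ t*a + (1-t)*b :=
    add_nonneg (mul_nonneg ht0.le ha0) (mul_nonneg ht0'.le hb0)
  have hcomb0' : (0:ℝ) ≤ t*b + (1-t)*a :=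
    add_nonneg (mul_nonneg ht0.le hb0) (mul_nonneg ht0'.le ha0)
  have hab : a = b := by
    by_contra hne
    have h1 : L (t*a + (1-t)*b) < t * L a + (1-t) * L b := by
      have := hconv.2 (ha0 : a ∈ Set.Ici (0:ℝ)) (hb0 : b ∈ Set.Ici (0:ℝ)) hne ht0 ht0'
        (by ring)
      simpa using this
    have h2 : L (t*b + (1-t)*a) < t * L b + (1-t) * L a := by
      have := hconv.2 (hb0 : b ∈ Set.Ici (0:ℝ)) (ha0 : a ∈ Set.Ici (0:ℝ)) (Ne.symm hne)
        ht0 ht0' (by ring)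
      simpa using this
    have hm1 : L (dist x₁ y₂) ≤ L (t*a+(1-t)*b) :=
      hmono.monotoneOn (dist_nonneg : dist x₁ y₂ ∈ Set.Ici (0:ℝ)) hcomb0 hd12
    have hm2 : L (dist x₂ y₁) ≤ L (t*b+(1-t)*a) :=
      hmono.monotoneOn (dist_nonneg : dist x₂ y₁ ∈ Set.Ici (0:ℝ)) hcomb0' hd21
    linarith
  -- now a = b
  have hd12a : dist x₁ y₂ ≤ a := by rw [hab] at hd12 ⊢; linarith
  have hd21a : dist x₂ y₁ ≤ a := by rw [hab] at hd21 ⊢; linarith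
  have hm1 : L (dist x₁ y₂) ≤ L a :=
    hmono.monotoneOn (dist_nonneg : dist x₁ y₂ ∈ Set.Ici (0:ℝ)) ha0 hd12a
  have hm2 : L (dist x₂ y₁) ≤ L a :=
    hmono.monotoneOn (dist_nonneg : dist x₂ y₁ ∈ Set.Ici (0:ℝ)) ha0 hd21a
  have hcm' : L a + L a ≤ L (dist x₁ y₂) + L (dist x₂ y₁) := by rw [hab] at hcm ⊢; linarith
  have he1 : L (dist x₁ y₂) = L a := by linarith
  have he2 : L (dist x₂ y₁) = L a := by linarith
  have hd12e : dist x₁ y₂ = a :=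
    hmono.injOn (dist_nonneg : dist x₁ y₂ ∈ Set.Ici (0:ℝ)) ha0 he1
  have hd21e : dist x₂ y₁ = a :=
    hmono.injOn (dist_nonneg : dist x₂ y₁ ∈ Set.Ici (0:ℝ)) ha0 he2
  rcases eq_or_lt_of_le ha0 with hA | hA
  · -- a = 0 : everything collapses
    have ha' : a = 0 := hA.symm
    have hx1z0 : x₁ = z := by
      have : dist x₁ z = 0 := by rw [hx1z, ha']; ring
      exact dist_eq_zero.mp this
    have hx2z0 : x₂ = z := by
      have : dist x₂ z = 0 := by rw [hx2z, ← hab, ha']; ring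
      exact dist_eq_zero.mp this
    have hzy10 : z = y₁ := by
      have : dist z y₁ = 0 := by rw [hzy1, ha']; ring
      exact dist_eq_zero.mp this
    have hzy20 : z = y₂ := by
      have : dist z y₂ = 0 := by rw [hzy2, ← hab, ha']; ring
      exact dist_eq_zero.mp this
    exact ⟨hab, hx1z0.trans hx2z0.symm, hzy10.symm.trans hzy20⟩
  · -- a > 0 : non-branching
    have hy : y₁ = y₂ := by
      apply hnb x₁ y₁ y₂ (by rw [← ha, hd12e]) (by rw [← ha]; exact hA)
      exact ⟨t, ⟨ht0, ht1⟩, z, ⟨hx1z, hzy1⟩,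
        ⟨by rw [hd12e, hx1z], by rw [hd12e, hzy2, ← hab]⟩⟩
    have hx : x₁ = x₂ := by
      refine (hnb y₁ x₁ x₂ ?_ ?_ ⟨1 - t, ⟨ht0', by linarith⟩, z, ⟨?_, ?_⟩, ⟨?_, ?_⟩⟩).symm ▸ rfl
      · rw [dist_comm y₁ x₁, dist_comm y₁ x₂]; linarith [hd21e]
      · rw [dist_comm y₁ x₁]; exact hA
      · rw [dist_comm y₁ z, dist_comm y₁ x₁]; exact hzy1
      · rw [dist_comm z x₁, dist_comm y₁ x₁, hx1z]; ring
      · rw [dist_comm y₁ z, dist_comm y₁ x₂, hd21e]; exact hzy1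
      · rw [dist_comm z x₂, dist_comm y₁ x₂, hd21e, hx2z, ← hab]; ring
    exact ⟨hab, hx, hy⟩
end
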